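/- Let H_A, H_B, H_C be finite-dimensional complex inner product spaces and Y ⊆ H_A ⊗ H_B a subspace. Let ρ_A = tr_B(P_Y), let ε > 0, let P_− be the spectral projection of ρ_A onto the eigenvalues lying in [0, ε), and let P_V be any orthogonal projection on H_A of rank V. Then for every unit vector y in the subspace Y ⊗ H_C of (H_A ⊗ H_B) ⊗ H_C, one has ‖(P_V P_− ⊗ id_{B} ⊗ id_C) y‖² ≤ ε·V. -/

import Mathlib

noncomputable section

/-- Concrete model of the Hilbert tensor product: the tensor `a ⊗ b`. -/
def tmul {ι κ : Type*} [Fintype ι] [Fintype κ]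
    (a : EuclideanSpace ℂ ι) (b : EuclideanSpace ℂ κ) : EuclideanSpace ℂ (ι × κ) :=
  WithLp.toLp 2 (fun p => a p.1 * b p.2)

/-- The subspace `V ⊗ H₂`: the span of the simple tensors `v ⊗ b` with `v ∈ V`. -/
def extSub {ι κ : Type*} [Fintype ι] [Fintype κ]
    (V : Submodule ℂ (EuclideanSpace ℂ ι)) : Submodule ℂ (EuclideanSpace ℂ (ι × κ)) :=
  Submodule.span ℂ {x | ∃ v ∈ V, ∃ b : EuclideanSpace ℂ κ, x = tmul v b}

/-- The operator `X ⊗ Y` on the concrete tensor product. -/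
def kron {ι κ : Type*} [Fintype ι] [Fintype κ] [DecidableEq ι] [DecidableEq κ]
    (X : EuclideanSpace ℂ ι →ₗ[ℂ] EuclideanSpace ℂ ι)
    (Y : EuclideanSpace ℂ κ →ₗ[ℂ] EuclideanSpace ℂ κ) :
    EuclideanSpace ℂ (ι × κ) →ₗ[ℂ] EuclideanSpace ℂ (ι × κ) :=
  Matrix.toEuclideanLin
    (Matrix.kroneckerMap (· * ·) (Matrix.toEuclideanLin.symm X) (Matrix.toEuclideanLin.symm Y))

/-- The orthogonal projection onto a subspace, as an operator on the ambient space. -/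
def projOf {E : Type*} [NormedAddCommGroup E] [InnerProductSpace ℂ E] [FiniteDimensional ℂ E]
    (S : Submodule ℂ E) : E →L[ℂ] E :=
  S.subtypeL.comp (S.orthogonalProjection)

/-- The span of the eigenvectors of `ρ` whose eigenvalue is a real number in the set `I`. -/
def specSub {E : Type*} [NormedAddCommGroup E] [InnerProductSpace ℂ E] [FiniteDimensional ℂ E]
    (ρ : E →ₗ[ℂ] E) (I : Set ℝ) : Submodule ℂ E :=
  ⨆ c : I, Module.End.eigenspace ρ ((c : ℝ) : ℂ)

/-! Slicing `y` along `H_C` reduces the claim to vectors `z ∈ Y`. With `M = P_V P₋`,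
`‖(M ⊗ 1) z‖² = ⟪z, (M†M ⊗ 1) z⟫`, and as `M†M ⊗ 1` is positive and `z = P_Y z`, this is at most
`tr (P_Y (M†M ⊗ 1)) ‖z‖² = tr (ρ_A M†M) ‖z‖²`. Testing the partial-trace identity on rank-one
operators `|a⟩⟨a|` shows that `ρ_A` is positive, so its eigenspaces are orthogonal and
`P₋ ρ_A P₋ ≤ ε` in the Loewner order. By cyclicity `tr (ρ_A M†M) = tr (P_V (P₋ ρ_A P₋) P_V)`,
which is therefore at most `ε tr P_V = ε V`. -/

open scoped InnerProductSpace ComplexOrder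

namespace LinearMap

variable {𝕜 E : Type*} [RCLike 𝕜] [NormedAddCommGroup E] [InnerProductSpace 𝕜 E]
  [FiniteDimensional 𝕜 E]

theorem IsSymmetricProjection.trace_comp {p : E →ₗ[𝕜] E} (hp : p.IsSymmetricProjection)
    (T : E →ₗ[𝕜] E) : trace 𝕜 E (p ∘ₗ T) = trace 𝕜 E (p ∘ₗ T ∘ₗ p) := by
  calc trace 𝕜 E (p ∘ₗ T) = trace 𝕜 E (p ∘ₗ p ∘ₗ T) := by
        rw [← comp_assoc, ← Module.End.mul_eq_comp p p, hp.isIdempotentElem.eq]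
    _ = trace 𝕜 E (p ∘ₗ T ∘ₗ p) := trace_comp_comm' _ _

theorem IsSymmetricProjection.isPositive_conj {p T : E →ₗ[𝕜] E} (hp : p.IsSymmetricProjection)
    (hT : T.IsPositive) : (p ∘ₗ T ∘ₗ p).IsPositive := by
  simpa only [hp.isSymmetric.adjoint_eq] using hT.conj_adjoint p

theorem IsPositive.re_inner_le_re_trace {T : E →ₗ[𝕜] E} (hT : T.IsPositive) {u : E}
    (hu : ‖u‖ = 1) : RCLike.re ⟪u, T u⟫_𝕜 ≤ RCLike.re (trace 𝕜 E T) := by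
  have hon : Orthonormal 𝕜 ((↑) : ({u} : Set E) → E) := by simp [hu]
  obtain ⟨s, b, hus, hb⟩ := hon.exists_orthonormalBasis_extension
  have hu_mem : u ∈ s := hus rfl
  rw [trace_eq_sum_inner T b, map_sum]
  calc RCLike.re ⟪u, T u⟫_𝕜 = RCLike.re ⟪b ⟨u, hu_mem⟩, T (b ⟨u, hu_mem⟩)⟫_𝕜 := by simp [hb]
    _ ≤ _ := Finset.single_le_sum (fun i _ => hT.re_inner_nonneg_right (b i))
        (Finset.mem_univ _)

theorem IsPositive.re_inner_le_re_trace_mul {T : E →ₗ[𝕜] E} (hT : T.IsPositive) (z : E) :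
    RCLike.re ⟪z, T z⟫_𝕜 ≤ RCLike.re (trace 𝕜 E T) * ‖z‖ ^ 2 := by
  rcases eq_or_ne z 0 with rfl | hz
  · simp
  set u := (‖z‖⁻¹ : 𝕜) • z
  have hu : ‖u‖ = 1 := by
    rw [norm_smul, norm_inv, RCLike.norm_ofReal, abs_norm,
      inv_mul_cancel₀ (norm_ne_zero_iff.mpr hz)]
  have hscale : ⟪z, T z⟫_𝕜 = ((‖z‖ ^ 2 : ℝ) : 𝕜) * ⟪u, T u⟫_𝕜 := by
    rw [map_smul, inner_smul_left, inner_smul_right, RCLike.conj_inv, RCLike.conj_ofReal]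
    field_simp
    push_cast
    ring
  rw [hscale, RCLike.re_ofReal_mul, mul_comm]
  exact mul_le_mul_of_nonneg_right (hT.re_inner_le_re_trace hu) (by positivity)

theorem IsSymmetricProjection.trace_comp_nonneg {p T : E →ₗ[𝕜] E}
    (hp : p.IsSymmetricProjection) (hT : T.IsPositive) : 0 ≤ trace 𝕜 E (p ∘ₗ T) :=
  hp.trace_comp T ▸ (hp.isPositive_conj hT).trace_nonneg

theorem IsSymmetricProjection.re_inner_le_re_trace_comp_mul {p T : E →ₗ[𝕜] E}
    (hp : p.IsSymmetricProjection) (hT : T.IsPositive) {z : E} (hz : z ∈ range p) :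
    RCLike.re ⟪z, T z⟫_𝕜 ≤ RCLike.re (trace 𝕜 E (p ∘ₗ T)) * ‖z‖ ^ 2 := by
  have hpz : p z = z := (IsIdempotentElem.mem_range_iff hp.isIdempotentElem).mp hz
  have hconj : ⟪z, T z⟫_𝕜 = ⟪z, (p ∘ₗ T ∘ₗ p) z⟫_𝕜 := by
    rw [comp_apply, comp_apply, ← hp.isSymmetric, hpz]
  rw [hconj, hp.trace_comp]
  exact (hp.isPositive_conj hT).re_inner_le_re_trace_mul z

theorem IsSymmetricProjection.re_trace_conj_le {p A : E →ₗ[𝕜] E} (hp : p.IsSymmetricProjection)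
    {c : ℝ} (hA : A ≤ (c : 𝕜) • 1) :
    RCLike.re (trace 𝕜 E (p ∘ₗ A ∘ₗ p)) ≤ c * Module.finrank 𝕜 (range p) := by
  have hconj : p ∘ₗ ((c : 𝕜) • 1 - A) ∘ₗ p = (c : 𝕜) • p - p ∘ₗ A ∘ₗ p := by
    rw [sub_comp, comp_sub, smul_comp, comp_smul, Module.End.one_eq_id, id_comp,
      ← Module.End.mul_eq_comp, hp.isIdempotentElem.eq]
  have h := (hp.isPositive_conj ((le_def _ _).mp hA)).trace_nonneg
  rw [hconj, map_sub, map_smul, (IsIdempotentElem.isProj_range p hp.isIdempotentElem).trace,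
    RCLike.nonneg_iff, map_sub, sub_nonneg] at h
  simpa using h.1

theorem IsSymmetricProjection.re_trace_comp_adjoint_comp_le {p q A : E →ₗ[𝕜] E}
    (hp : p.IsSymmetricProjection) (hq : q.IsSymmetricProjection) {c : ℝ}
    (hA : q ∘ₗ A ∘ₗ q ≤ (c : 𝕜) • 1) :
    RCLike.re (trace 𝕜 E (A ∘ₗ (p ∘ₗ q).adjoint ∘ₗ (p ∘ₗ q))) ≤
      c * Module.finrank 𝕜 (range p) := by
  have hadj : (p ∘ₗ q).adjoint = q ∘ₗ p := by
    rw [adjoint_comp, hp.isSymmetric.adjoint_eq, hq.isSymmetric.adjoint_eq]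
  have hpp : p ∘ₗ p = p := hp.isIdempotentElem.eq
  have hcyc : trace 𝕜 E (A ∘ₗ (q ∘ₗ p) ∘ₗ (p ∘ₗ q)) = trace 𝕜 E (p ∘ₗ (q ∘ₗ A ∘ₗ q) ∘ₗ p) :=
    calc trace 𝕜 E (A ∘ₗ (q ∘ₗ p) ∘ₗ (p ∘ₗ q))
        = trace 𝕜 E ((A ∘ₗ q ∘ₗ p) ∘ₗ q) := by
          change trace 𝕜 E (A ∘ₗ q ∘ₗ (p ∘ₗ p) ∘ₗ q) = _
          rw [hpp]
          rfl
      _ = trace 𝕜 E (p ∘ₗ (q ∘ₗ A ∘ₗ q)) :=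
          (trace_comp_comm' q (A ∘ₗ q ∘ₗ p)).trans (trace_comp_comm' p (q ∘ₗ A ∘ₗ q))
      _ = trace 𝕜 E (p ∘ₗ (q ∘ₗ A ∘ₗ q) ∘ₗ p) := hp.trace_comp _
  rw [hadj, hcyc]
  exact hp.re_trace_conj_le hA

end LinearMap

section Spectral

variable {E : Type*} [NormedAddCommGroup E] [InnerProductSpace ℂ E] [FiniteDimensional ℂ E]

theorem isSymmetricProjection_projOf (S : Submodule ℂ E) :
    (projOf S).toLinearMap.IsSymmetricProjection :=
  S.isSymmetricProjection_starProjection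

theorem re_inner_le_of_mem_specSub {ρ : E →ₗ[ℂ] E} (hρ : ρ.IsSymmetric) {I : Set ℝ} {ε : ℝ}
    (hI : ∀ c ∈ I, c ≤ ε) {s : E} (hs : s ∈ specSub ρ I) :
    (⟪s, ρ s⟫_ℂ).re ≤ ε * ‖s‖ ^ 2 := by
  obtain ⟨t, ht⟩ := Submodule.mem_iSup_iff_exists_finset.mp hs
  obtain ⟨l, rfl⟩ := (Submodule.mem_iSup_finset_iff_exists_sum _ _).mp ht
  let V (c : I) := Module.End.eigenspace ρ ((c : ℝ) : ℂ)
  have hV : OrthogonalFamily ℂ (fun c => V c) fun c => (V c).subtypeₗᵢ :=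
    hρ.orthogonalFamily_eigenspaces.comp (Complex.ofReal_injective.comp Subtype.val_injective)
  have hρl : ρ (∑ c ∈ t, (l c : E)) = ∑ c ∈ t, (V c).subtypeₗᵢ (((c : ℝ) : ℂ) • l c) := by
    simp [map_sum, Module.End.mem_eigenspace_iff.mp (l _).2]
  have hsum : ∑ c ∈ t, (l c : E) = ∑ c ∈ t, (V c).subtypeₗᵢ (l c) := rfl
  rw [hρl, hsum, hV.inner_sum, hV.norm_sum, Complex.re_sum, Finset.mul_sum]
  refine Finset.sum_le_sum fun c _ => ?_
  rw [inner_smul_right, inner_self_eq_norm_sq_to_K]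
  simpa [← Complex.ofReal_pow] using mul_le_mul_of_nonneg_right (hI c c.2) (sq_nonneg ‖(l c : E)‖)

theorem projOf_specSub_conj_le {ρ : E →ₗ[ℂ] E} (hρ : ρ.IsSymmetric) {I : Set ℝ} {ε : ℝ}
    (hε : 0 ≤ ε) (hI : ∀ c ∈ I, c ≤ ε) :
    (projOf (specSub ρ I)).toLinearMap ∘ₗ ρ ∘ₗ (projOf (specSub ρ I)).toLinearMap ≤
      (ε : ℂ) • 1 := by
  set S := specSub ρ I
  set Q := (projOf S).toLinearMap
  have hQ : Q.IsSymmetric := (isSymmetricProjection_projOf S).isSymmetric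
  refine ⟨(LinearMap.IsSymmetric.one.smul (Complex.conj_ofReal ε)).sub fun x y => ?_, fun x => ?_⟩
  · simp only [LinearMap.comp_apply]
    rw [hQ, hρ, hQ]
  · have hspec : (⟪Q x, ρ (Q x)⟫_ℂ).re ≤ ε * ‖Q x‖ ^ 2 :=
      re_inner_le_of_mem_specSub hρ hI (S.starProjection_apply_mem x)
    have hcontr : ‖Q x‖ ≤ ‖x‖ := S.norm_starProjection_apply_le x
    have hquad : ⟪Q (ρ (Q x)), x⟫_ℂ = ⟪Q x, ρ (Q x)⟫_ℂ := by rw [hQ, hρ]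
    simp only [LinearMap.sub_apply, LinearMap.smul_apply, Module.End.one_apply,
      LinearMap.comp_apply, inner_sub_left, inner_smul_left, hquad, Complex.conj_ofReal]
    rw [map_sub, sub_nonneg, ← RCLike.ofReal_eq_complex_ofReal, RCLike.re_ofReal_mul,
      inner_self_eq_norm_sq]
    calc (⟪Q x, ρ (Q x)⟫_ℂ).re ≤ ε * ‖Q x‖ ^ 2 := hspec
      _ ≤ ε * ‖x‖ ^ 2 := by gcongr

end Spectral

section Slice

variable {ι κ : Type*}

def slice (c : κ) : EuclideanSpace ℂ (ι × κ) →ₗ[ℂ] EuclideanSpace ℂ ι where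
  toFun z := WithLp.toLp 2 fun i => z (i, c)
  map_add' _ _ := rfl
  map_smul' _ _ := rfl

theorem slice_apply (c : κ) (z : EuclideanSpace ℂ (ι × κ)) (i : ι) : slice c z i = z (i, c) :=
  rfl

variable [Fintype ι] [Fintype κ]

theorem inner_eq_sum_inner_slice (z w : EuclideanSpace ℂ (ι × κ)) :
    ⟪z, w⟫_ℂ = ∑ c, ⟪slice c z, slice c w⟫_ℂ := by
  simp only [PiLp.inner_apply, slice_apply]
  exact Fintype.sum_prod_type_right _

theorem norm_sq_eq_sum_norm_sq_slice (z : EuclideanSpace ℂ (ι × κ)) :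
    ‖z‖ ^ 2 = ∑ c, ‖slice c z‖ ^ 2 := by
  simp only [← inner_self_eq_norm_sq (𝕜 := ℂ), inner_eq_sum_inner_slice z z, map_sum]

theorem slice_tmul (a : EuclideanSpace ℂ ι) (b : EuclideanSpace ℂ κ) (c : κ) :
    slice c (tmul a b) = b c • a := by
  ext i
  exact mul_comm (a i) (b c)

theorem slice_mem_of_mem_extSub {Y : Submodule ℂ (EuclideanSpace ℂ ι)}
    {z : EuclideanSpace ℂ (ι × κ)} (hz : z ∈ extSub Y) (c : κ) : slice c z ∈ Y := by
  induction hz using Submodule.span_induction with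
  | mem x hx =>
    obtain ⟨v, hv, b, rfl⟩ := hx
    rw [slice_tmul]
    exact Y.smul_mem _ hv
  | zero => simp
  | add x y _ _ hx hy => simpa using Y.add_mem hx hy
  | smul a x _ hx => simpa using Y.smul_mem a hx

variable [DecidableEq ι] [DecidableEq κ]

theorem slice_kron_id (X : EuclideanSpace ℂ ι →ₗ[ℂ] EuclideanSpace ℂ ι)
    (z : EuclideanSpace ℂ (ι × κ)) (c : κ) :
    slice c (kron X LinearMap.id z) = X (slice c z) := by
  obtain ⟨A, rfl⟩ := Matrix.toEuclideanLin.surjective X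
  have hid : Matrix.toEuclideanLin.symm (LinearMap.id : EuclideanSpace ℂ κ →ₗ[ℂ] _) = 1 := by
    rw [LinearEquiv.symm_apply_eq, Matrix.toLpLin_one]
  ext i
  simp only [kron, LinearEquiv.symm_apply_apply, hid, slice_apply, Matrix.toLpLin_apply,
    Matrix.mulVec, dotProduct, Fintype.sum_prod_type, Matrix.kroneckerMap_apply, Matrix.one_apply]
  simp [mul_ite]

theorem LinearMap.IsPositive.kron_id {X : EuclideanSpace ℂ ι →ₗ[ℂ] EuclideanSpace ℂ ι}
    (hX : X.IsPositive) :
    (kron X (LinearMap.id : EuclideanSpace ℂ κ →ₗ[ℂ] _)).IsPositive := by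
  refine ⟨fun u w => ?_, fun u => ?_⟩
  · simp only [inner_eq_sum_inner_slice, slice_kron_id]
    exact Finset.sum_congr rfl fun c _ => hX.isSymmetric _ _
  · rw [inner_eq_sum_inner_slice, map_sum]
    refine Finset.sum_nonneg fun c _ => ?_
    rw [slice_kron_id]
    exact hX.re_inner_nonneg_left _

theorem norm_kron_id_apply_sq (M : EuclideanSpace ℂ ι →ₗ[ℂ] EuclideanSpace ℂ ι)
    (z : EuclideanSpace ℂ (ι × κ)) :
    ‖kron M LinearMap.id z‖ ^ 2 = (⟪z, kron (M.adjoint ∘ₗ M) LinearMap.id z⟫_ℂ).re := by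
  rw [norm_sq_eq_sum_norm_sq_slice, inner_eq_sum_inner_slice, Complex.re_sum]
  refine Finset.sum_congr rfl fun c _ => ?_
  rw [slice_kron_id, slice_kron_id, LinearMap.comp_apply, LinearMap.adjoint_inner_right,
    ← RCLike.re_to_complex, inner_self_eq_norm_sq]

end Slice

section PartialTrace

variable {ι κ : Type*} [Fintype ι] [Fintype κ] [DecidableEq ι] [DecidableEq κ]
  {ρ : EuclideanSpace ℂ ι →ₗ[ℂ] EuclideanSpace ℂ ι}
  {T : EuclideanSpace ℂ (ι × κ) →ₗ[ℂ] EuclideanSpace ℂ (ι × κ)}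

/-- `ρ = tr_κ T`. -/
def IsPartialTrace (ρ : EuclideanSpace ℂ ι →ₗ[ℂ] EuclideanSpace ℂ ι)
    (T : EuclideanSpace ℂ (ι × κ) →ₗ[ℂ] EuclideanSpace ℂ (ι × κ)) : Prop :=
  ∀ X : EuclideanSpace ℂ ι →ₗ[ℂ] EuclideanSpace ℂ ι,
    LinearMap.trace ℂ _ (ρ ∘ₗ X) = LinearMap.trace ℂ _ (T ∘ₗ kron X LinearMap.id)

theorem IsPartialTrace.isPositive (hρ : IsPartialTrace ρ T) (hT : T.IsSymmetricProjection) :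
    ρ.IsPositive := by
  have hquad (a : EuclideanSpace ℂ ι) : 0 ≤ ⟪a, ρ a⟫_ℂ := by
    let R := (InnerProductSpace.rankOne ℂ a a).toLinearMap
    have hR : ρ ∘ₗ R = (InnerProductSpace.rankOne ℂ (ρ a) a).toLinearMap := by
      ext v
      simp [R, InnerProductSpace.rankOne_apply]
    rw [← InnerProductSpace.trace_rankOne, ← hR, hρ]
    exact hT.trace_comp_nonneg (InnerProductSpace.isPositive_rankOne_self a).toLinearMap.kron_id
  have hquad' (a : EuclideanSpace ℂ ι) : 0 ≤ ⟪ρ a, a⟫_ℂ := by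
    rw [← inner_conj_symm]
    exact star_nonneg_iff.mpr (hquad a)
  refine (LinearMap.isPositive_iff ρ).mpr ⟨?_, hquad'⟩
  rw [LinearMap.isSymmetric_iff_inner_map_self_real]
  exact fun a => Complex.conj_eq_iff_im.mpr (Complex.nonneg_iff.mp (hquad' a)).2.symm

theorem IsPartialTrace.norm_kron_id_apply_sq_le (hρ : IsPartialTrace ρ T)
    (hT : T.IsSymmetricProjection) (M : EuclideanSpace ℂ ι →ₗ[ℂ] EuclideanSpace ℂ ι)
    {z : EuclideanSpace ℂ (ι × κ)} (hz : z ∈ LinearMap.range T) :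
    ‖kron M LinearMap.id z‖ ^ 2 ≤ (LinearMap.trace ℂ _ (ρ ∘ₗ M.adjoint ∘ₗ M)).re * ‖z‖ ^ 2 := by
  rw [norm_kron_id_apply_sq, hρ]
  exact hT.re_inner_le_re_trace_comp_mul (LinearMap.isPositive_adjoint_comp_self M).kron_id hz

theorem IsPartialTrace.norm_kron_kron_id_apply_sq_le {ν : Type*} [Fintype ν] [DecidableEq ν]
    {Y : Submodule ℂ (EuclideanSpace ℂ (ι × κ))} (hρ : IsPartialTrace ρ (projOf Y).toLinearMap)
    (M : EuclideanSpace ℂ ι →ₗ[ℂ] EuclideanSpace ℂ ι) {y : EuclideanSpace ℂ ((ι × κ) × ν)}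
    (hy : y ∈ extSub Y) :
    ‖kron (kron M LinearMap.id) LinearMap.id y‖ ^ 2 ≤
      (LinearMap.trace ℂ _ (ρ ∘ₗ M.adjoint ∘ₗ M)).re * ‖y‖ ^ 2 := by
  rw [norm_sq_eq_sum_norm_sq_slice, norm_sq_eq_sum_norm_sq_slice y, Finset.mul_sum]
  refine Finset.sum_le_sum fun c _ => ?_
  rw [slice_kron_id]
  exact hρ.norm_kron_id_apply_sq_le (isSymmetricProjection_projOf Y) M
    ⟨_, Y.starProjection_eq_self_iff.mpr (slice_mem_of_mem_extSub hy c)⟩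

end PartialTrace

/-- Trimming error estimate: if `ρ_A = tr_B(P_Y)`, `P₋` is the spectral projection of `ρ_A`
onto `[0, ε)` and `P_V` is any rank-`V` orthogonal projection on `H_A`, then for any unit
vector `y ∈ Y ⊗ H_C` one has `‖(P_V P₋ ⊗ id_B ⊗ id_C) y‖² ≤ ε·V`. -/
theorem trimming_error_bound
    {ιA ιB ιC : Type*} [Fintype ιA] [Fintype ιB] [Fintype ιC]
    [DecidableEq ιA] [DecidableEq ιB] [DecidableEq ιC]
    (Y : Submodule ℂ (EuclideanSpace ℂ (ιA × ιB)))
    (ρA : EuclideanSpace ℂ ιA →ₗ[ℂ] EuclideanSpace ℂ ιA)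
    (hρ : ∀ X : EuclideanSpace ℂ ιA →ₗ[ℂ] EuclideanSpace ℂ ιA,
      LinearMap.trace ℂ _ (ρA ∘ₗ X) =
        LinearMap.trace ℂ _ ((projOf Y).toLinearMap ∘ₗ kron X LinearMap.id))
    (ε : ℝ) (hε : 0 < ε)
    (PV : EuclideanSpace ℂ ιA →L[ℂ] EuclideanSpace ℂ ιA)
    (hPVidem : PV.comp PV = PV) (hPVsa : IsSelfAdjoint PV)
    (V : ℕ) (hrank : Module.finrank ℂ (LinearMap.range PV.toLinearMap) = V)
    (y : EuclideanSpace ℂ ((ιA × ιB) × ιC))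
    (hy : y ∈ extSub (κ := ιC) Y) (hy1 : ‖y‖ = 1) :
    ‖(kron (kron ((PV.comp (projOf (specSub ρA (Set.Ico 0 ε)))).toLinearMap) LinearMap.id)
        LinearMap.id) y‖ ^ 2 ≤ ε * V := by
  have hPV : PV.toLinearMap.IsSymmetricProjection :=
    ⟨congrArg ContinuousLinearMap.toLinearMap hPVidem,
      ContinuousLinearMap.isSelfAdjoint_iff_isSymmetric.mp hPVsa⟩
  have hρ : IsPartialTrace ρA (projOf Y).toLinearMap := hρ
  have hspec := projOf_specSub_conj_le (hρ.isPositive (isSymmetricProjection_projOf Y)).isSymmetric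
    hε.le fun c (hc : c ∈ Set.Ico 0 ε) => hc.2.le
  calc _ ≤ _ := hρ.norm_kron_kron_id_apply_sq_le _ hy
    _ ≤ ε * V := by
      rw [hy1, one_pow, mul_one, ← hrank]
      exact hPV.re_trace_comp_adjoint_comp_le (isSymmetricProjection_projOf _) hspec
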